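/- arXiv:2509.04413 — 5 statements merged into one kernel-verified Lean document; each statement's English description precedes it below -/
import Mathlib

section
/- Let A ∈ ℝ^{n×n}, B ∈ ℝ^{n×m}, K ∈ ℝ^{m×n}, and let U₀ ∈ ℝ^{m×N}, X₀ ∈ ℝ^{n×N}, X₁ ∈ ℝ^{n×N} satisfy X₁ = A·X₀ + B·U₀. If G₁ ∈ ℝ^{N×n} and G₂ ∈ ℝ^{N×m} satisfy X₀·G₁ = I_n, U₀·G₁ = K, X₀·G₂ = 0, and U₀·G₂ = I_m, then X₁·(I_N − G₂·U₀)·G₁ = A. That is, the open-loop state matrix A is recovered purely from the data matrices and the factorization matrices G₁, G₂. -/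
open Matrix

/-- Under the data-consistency relation and the factorization
identities, the open-loop matrix is recovered: `X₁ (I_N − G₂ U₀) G₁ = A`. -/
theorem stmt4 (N n m : ℕ)
    (A : Matrix (Fin n) (Fin n) ℝ) (B : Matrix (Fin n) (Fin m) ℝ)
    (K : Matrix (Fin m) (Fin n) ℝ)
    (U₀ : Matrix (Fin m) (Fin N) ℝ) (X₀ X₁ : Matrix (Fin n) (Fin N) ℝ)
    (hdata : X₁ = A * X₀ + B * U₀)
    (G₁ : Matrix (Fin N) (Fin n) ℝ) (G₂ : Matrix (Fin N) (Fin m) ℝ)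
    (hXG₁ : X₀ * G₁ = (1 : Matrix (Fin n) (Fin n) ℝ))
    (hUG₁ : U₀ * G₁ = K)
    (hXG₂ : X₀ * G₂ = 0)
    (hUG₂ : U₀ * G₂ = (1 : Matrix (Fin m) (Fin m) ℝ)) :
    X₁ * ((1 : Matrix (Fin N) (Fin N) ℝ) - G₂ * U₀) * G₁ = A := by
  subst hdata
  have h : (A * X₀ + B * U₀) * (1 - G₂ * U₀) * G₁ =
      A * (X₀ * G₁) - A * (X₀ * G₂) * (U₀ * G₁) + (B * (U₀ * G₁) - B * (U₀ * G₂) * (U₀ * G₁)) := by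
    simp only [Matrix.mul_sub, Matrix.sub_mul, Matrix.add_mul, Matrix.mul_one, Matrix.mul_assoc]
    abel
  rw [h, hXG₁, hUG₁, hXG₂, hUG₂]
  simp
end

section
/- Let A ∈ ℝ^{n×n}, B ∈ ℝ^{n×m}, and let U₀ ∈ ℝ^{m×N}, X₀ ∈ ℝ^{n×N}, X₁ ∈ ℝ^{n×N} satisfy X₁ = A·X₀ + B·U₀. Let P ∈ ℝ^{n×n} be invertible and let S ∈ ℝ^{N×n} satisfy X₀·S = P. Define the feedback gain K := U₀·S·P⁻¹. Then X₁·S·P⁻¹ = A + B·K, i.e., the data-based matrix X₁SP⁻¹ equals the closed-loop state matrix A + BK. -/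
open Matrix

/-- If `X₁ = A X₀ + B U₀`, `P` is invertible, and `X₀ S = P`,
then with `K := U₀ S P⁻¹` one has `X₁ S P⁻¹ = A + B K`. -/
theorem stmt5 (N n m : ℕ)
    (A : Matrix (Fin n) (Fin n) ℝ) (B : Matrix (Fin n) (Fin m) ℝ)
    (U₀ : Matrix (Fin m) (Fin N) ℝ) (X₀ X₁ : Matrix (Fin n) (Fin N) ℝ)
    (hdata : X₁ = A * X₀ + B * U₀)
    (P : Matrix (Fin n) (Fin n) ℝ) (hP : IsUnit P)
    (S : Matrix (Fin N) (Fin n) ℝ)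
    (hS : X₀ * S = P) :
    X₁ * S * P⁻¹ = A + B * (U₀ * S * P⁻¹) := by
  subst hdata
  have hPP : P * P⁻¹ = 1 := mul_nonsing_inv P (isUnit_iff_isUnit_det P |>.mp hP)
  rw [Matrix.add_mul, Matrix.add_mul, Matrix.mul_assoc A, hS, Matrix.mul_assoc A P, hPP,
    Matrix.mul_one, Matrix.mul_assoc B, Matrix.mul_assoc]
end

section
/- Let P ∈ ℝ^{n×n} be symmetric positive definite, let X₁ ∈ ℝ^{n×N}, S ∈ ℝ^{N×n}, and let λ > 0. If the block matrix [[P, X₁·S],[(X₁·S)ᵀ, λ·P]] ∈ ℝ^{2n×2n} is positive semidefinite, then, setting G₁ := S·P⁻¹, the closed-loop matrix M := X₁·G₁ satisfies Mᵀ·P⁻¹·M ⪯ λ·P⁻¹; equivalently, for every e ∈ ℝⁿ, (M e)ᵀP⁻¹(M e) ≤ λ·eᵀP⁻¹e. -/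
open Matrix

/-- Schur-complement step: if the block matrix
`[[P, X₁S],[(X₁S)ᵀ, l P]]` is positive semidefinite, then with `G₁ := S P⁻¹`
and `M := X₁ G₁`, one has `MᵀP⁻¹M ⪯ l P⁻¹`, i.e. the quadratic form contracts. -/
theorem stmt7 (n N : ℕ)
    (P : Matrix (Fin n) (Fin n) ℝ) (hP : P.PosDef)
    (X₁ : Matrix (Fin n) (Fin N) ℝ) (S : Matrix (Fin N) (Fin n) ℝ)
    (l : ℝ) (hl : 0 < l)
    (hblk : (Matrix.fromBlocks P (X₁ * S) (X₁ * S)ᵀ (l • P)).PosSemidef) :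
    (l • P⁻¹ - (X₁ * (S * P⁻¹))ᵀ * P⁻¹ * (X₁ * (S * P⁻¹))).PosSemidef ∧
    ∀ e : Fin n → ℝ,
      ((X₁ * (S * P⁻¹)) *ᵥ e) ⬝ᵥ (P⁻¹ *ᵥ ((X₁ * (S * P⁻¹)) *ᵥ e))
        ≤ l * (e ⬝ᵥ (P⁻¹ *ᵥ e)) := by
  have hPinv : Invertible P := hP.isUnit.invertible
  set B : Matrix (Fin n) (Fin n) ℝ := X₁ * S with hB
  have hschur : ((l • P) - Bᴴ * P⁻¹ * B).PosSemidef := by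
    rw [← Matrix.PosDef.fromBlocks₁₁ _ _ hP]
    have : Bᴴ = Bᵀ := Matrix.conjTranspose_eq_transpose_of_trivial B
    rw [this]
    exact hblk
  have hPinvH : (P⁻¹)ᴴ = P⁻¹ := hP.inv.isHermitian.eq
  have hconj : ((P⁻¹)ᴴ * ((l • P) - Bᴴ * P⁻¹ * B) * P⁻¹).PosSemidef :=
    hschur.conjTranspose_mul_mul_same _
  have hinvP : P⁻¹ * P = 1 := Matrix.inv_mul_of_invertible P
  have hBT : Bᴴ = Bᵀ := Matrix.conjTranspose_eq_transpose_of_trivial B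
  have hkey : (l • P⁻¹ - (X₁ * (S * P⁻¹))ᵀ * P⁻¹ * (X₁ * (S * P⁻¹))).PosSemidef := by
    have heq : (P⁻¹)ᴴ * ((l • P) - Bᴴ * P⁻¹ * B) * P⁻¹
        = l • P⁻¹ - (X₁ * (S * P⁻¹))ᵀ * P⁻¹ * (X₁ * (S * P⁻¹)) := by
      have h2 : X₁ * (S * P⁻¹) = B * P⁻¹ := by rw [hB, Matrix.mul_assoc]
      have hPT : Pᵀ = P := by
        have := hP.isHermitian.eq
        rwa [Matrix.conjTranspose_eq_transpose_of_trivial] at this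
      have hPiT : (P⁻¹)ᵀ = P⁻¹ := by rw [Matrix.transpose_nonsing_inv, hPT]
      have haux : ∀ Q : Matrix (Fin n) (Fin n) ℝ,
          P⁻¹ * ((l • P) - Qᵀ * P⁻¹ * Q) * P⁻¹
            = l • P⁻¹ - (Q * P⁻¹)ᵀ * P⁻¹ * (Q * P⁻¹) := by
        intro Q
        rw [Matrix.transpose_mul, hPiT, Matrix.mul_sub, Matrix.sub_mul]
        congr 1
        · rw [Matrix.mul_smul, Matrix.smul_mul, hinvP, Matrix.one_mul]
        · noncomm_ring
      rw [h2, hPinvH, hBT]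
      exact haux B
    rwa [heq] at hconj
  refine ⟨hkey, fun e => ?_⟩
  have h := hkey.dotProduct_mulVec_nonneg e
  set M := X₁ * (S * P⁻¹) with hM
  have hexp : star e ⬝ᵥ ((l • P⁻¹ - Mᵀ * P⁻¹ * M) *ᵥ e)
      = l * (e ⬝ᵥ (P⁻¹ *ᵥ e)) - (M *ᵥ e) ⬝ᵥ (P⁻¹ *ᵥ (M *ᵥ e)) := by
    simp only [star_trivial, Matrix.sub_mulVec, dotProduct_sub,
      Matrix.smul_mulVec, dotProduct_smul, smul_eq_mul]
    congr 1
    rw [← Matrix.mulVec_mulVec, ← Matrix.mulVec_mulVec, Matrix.dotProduct_mulVec,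
      Matrix.vecMul_transpose]
  have := h
  rw [hexp] at this
  linarith
end

section
/- Let P ∈ ℝ^{n×n} be symmetric positive definite, M ∈ ℝ^{n×n}, and λ ∈ (0,1] with Mᵀ·P⁻¹·M ⪯ λ·P⁻¹. Let F ∈ ℝ^{q×n} and g ∈ ℝ^q with gᵣ > 0 for every r, and suppose Fᵣ·P·Fᵣᵀ ≤ gᵣ² for every row index r (so that E(P,0) ⊆ {e : F e ≤ g}). Then for every trajectory e(k+1) = M·e(k) with e(0) ∈ E(P,0), the polytopic constraints are satisfied at all times: F·e(k) ≤ g (componentwise) for every k ∈ ℕ. -/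
open Matrix

/-- Cauchy–Schwarz for a real PSD matrix. -/
lemma psd_cauchy_schwarz {n : ℕ} {A : Matrix (Fin n) (Fin n) ℝ} (hA : A.PosSemidef)
    (x y : Fin n → ℝ) :
    (x ⬝ᵥ (A *ᵥ y)) ^ 2 ≤ (x ⬝ᵥ (A *ᵥ x)) * (y ⬝ᵥ (A *ᵥ y)) := by
  have hAt : Aᵀ = A := by
    have := hA.1.eq
    simpa using this
  have hsym : ∀ u v : Fin n → ℝ, u ⬝ᵥ (A *ᵥ v) = v ⬝ᵥ (A *ᵥ u) := by
    intro u v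
    rw [dotProduct_mulVec, ← mulVec_transpose, hAt]
    exact dotProduct_comm _ _
  have key : ∀ t : ℝ, 0 ≤ (x ⬝ᵥ (A *ᵥ x)) * (t * t) + (2 * (x ⬝ᵥ (A *ᵥ y))) * t
      + (y ⬝ᵥ (A *ᵥ y)) := by
    intro t
    have h := hA.dotProduct_mulVec_nonneg (t • x + y)
    simp only [star_trivial, mulVec_add, mulVec_smul, dotProduct_add, add_dotProduct,
      smul_dotProduct, dotProduct_smul, smul_eq_mul] at h
    have hxy := hsym y x
    have heq : (x ⬝ᵥ (A *ᵥ x)) * (t * t) + (2 * (x ⬝ᵥ (A *ᵥ y))) * t + (y ⬝ᵥ (A *ᵥ y))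
        = t * (t * (x ⬝ᵥ A *ᵥ x) + y ⬝ᵥ A *ᵥ x) + (t * (x ⬝ᵥ A *ᵥ y) + y ⬝ᵥ A *ᵥ y) := by
      rw [hxy]; ring
    rw [heq]
    exact h
  have hd := discrim_le_zero key
  rw [discrim] at hd
  nlinarith [hd]

/-- If `E(P,0)` is λ-contractive for `e(k+1) = M e(k)` and contained
in the polytope `{e : F e ≤ g}` (via the facet conditions `Fᵣ P Fᵣᵀ ≤ gᵣ²`, `gᵣ > 0`),
then every trajectory starting in `E(P,0)` satisfies `F e(k) ≤ g` for all `k`. -/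
theorem stmt14 (n q : ℕ)
    (P : Matrix (Fin n) (Fin n) ℝ) (hP : P.PosDef)
    (M : Matrix (Fin n) (Fin n) ℝ)
    (l : ℝ) (hl0 : 0 < l) (hl1 : l ≤ 1)
    (hcontr : (l • P⁻¹ - Mᵀ * P⁻¹ * M).PosSemidef)
    (F : Matrix (Fin q) (Fin n) ℝ) (g : Fin q → ℝ) (hg : ∀ r, 0 < g r)
    (hfacet : ∀ r, (F r) ⬝ᵥ (P *ᵥ (F r)) ≤ (g r) ^ 2)
    (e : ℕ → (Fin n → ℝ))
    (hdyn : ∀ k, e (k + 1) = M *ᵥ e k)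
    (h0 : e 0 ⬝ᵥ (P⁻¹ *ᵥ e 0) ≤ 1) :
    ∀ (k : ℕ) (r : Fin q), (F *ᵥ e k) r ≤ g r := by
  have hPinv : (P⁻¹).PosDef := hP.inv
  -- invariance of the ellipsoid
  have hinv : ∀ k, e k ⬝ᵥ (P⁻¹ *ᵥ e k) ≤ 1 := by
    intro k
    induction k with
    | zero => exact h0
    | succ k ih =>
      have h1 := hcontr.dotProduct_mulVec_nonneg (e k)
      simp only [star_trivial, sub_mulVec, smul_mulVec, dotProduct_sub,
        dotProduct_smul, smul_eq_mul] at h1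
      have h2 : (M *ᵥ e k) ⬝ᵥ (P⁻¹ *ᵥ (M *ᵥ e k)) = e k ⬝ᵥ ((Mᵀ * P⁻¹ * M) *ᵥ e k) := by
        rw [← mulVec_mulVec, ← mulVec_mulVec, dotProduct_mulVec (e k), vecMul_transpose]
      have h3 : 0 ≤ e k ⬝ᵥ (P⁻¹ *ᵥ e k) := hPinv.posSemidef.dotProduct_mulVec_nonneg (e k)
      rw [hdyn k, h2]
      nlinarith [h1]
  intro k r
  have hcs := psd_cauchy_schwarz hP.posSemidef (F r) (P⁻¹ *ᵥ e k)
  have hPP : P *ᵥ (P⁻¹ *ᵥ e k) = e k := by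
    rw [mulVec_mulVec, Matrix.mul_nonsing_inv _ (isUnit_iff_ne_zero.mpr hP.det_pos.ne'),
      one_mulVec]
  rw [hPP, dotProduct_comm (P⁻¹ *ᵥ e k) (e k)] at hcs
  have h4 : (F r ⬝ᵥ e k) ^ 2 ≤ (g r) ^ 2 := by
    have h5 := hfacet r
    have h6 := hinv k
    have h7 : 0 ≤ F r ⬝ᵥ (P *ᵥ F r) := hP.posSemidef.dotProduct_mulVec_nonneg (F r)
    nlinarith [hcs]
  have : (F *ᵥ e k) r = F r ⬝ᵥ e k := rfl
  rw [this]
  nlinarith [hg r, h4]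
end

section
/- (Safe controller design from data.) Let A ∈ ℝ^{n×n}, B ∈ ℝ^{n×m}, and let U₀ ∈ ℝ^{m×N}, X₀ ∈ ℝ^{n×N}, X₁ ∈ ℝ^{n×N} satisfy the data-consistency relation X₁ = A·X₀ + B·U₀. Let λ ∈ (0,1), let F ∈ ℝ^{q×n} and g ∈ ℝ^q with gᵣ > 0 for all r, and suppose there exist a symmetric positive definite P ∈ ℝ^{n×n} and S ∈ ℝ^{N×n} such that: (i) the block matrix [[P, X₁·S],[(X₁·S)ᵀ, λ·P]] is positive semidefinite; (ii) Fᵣ·P·Fᵣᵀ ≤ gᵣ² for every row index r ∈ {1,…,q}; and (iii) X₀·S = P. Define the feedback gain K := U₀·S·P⁻¹ and the closed-loop matrix M := A + B·K. Then: (a) Mᵀ·P⁻¹·M ⪯ λ·P⁻¹, so the ellipsoid E(P,0) := {e : eᵀP⁻¹e ≤ 1} is λ-contractive for the closed-loop error dynamics e(k+1) = (A+BK)·e(k); and (b) E(P,0) ⊆ {e ∈ ℝⁿ : F·e ≤ g}. Consequently every closed-loop trajectory starting in E(P,0) remains in E(P,0) and satisfies F·e(k) ≤ g for all k ∈ ℕ.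 -/
open Matrix

/-- Safe controller design from data: under the LMI constraint, the
facet constraints, and the data relation `X₀ S = P`, the gain `K := U₀ S P⁻¹` yields a
closed-loop matrix `M := A + B K` such that (a) `MᵀP⁻¹M ⪯ l P⁻¹` (λ-contractivity of
`E(P,0)`), (b) `E(P,0) ⊆ {e : F e ≤ g}`, and (c) every closed-loop trajectory starting
in `E(P,0)` remains in `E(P,0)` and satisfies `F e(k) ≤ g` for all `k`. -/
theorem stmt15 (n m N q : ℕ)
    (A : Matrix (Fin n) (Fin n) ℝ) (B : Matrix (Fin n) (Fin m) ℝ)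
    (U₀ : Matrix (Fin m) (Fin N) ℝ) (X₀ X₁ : Matrix (Fin n) (Fin N) ℝ)
    (hdata : X₁ = A * X₀ + B * U₀)
    (l : ℝ) (hl0 : 0 < l) (hl1 : l < 1)
    (F : Matrix (Fin q) (Fin n) ℝ) (g : Fin q → ℝ) (hg : ∀ r, 0 < g r)
    (P : Matrix (Fin n) (Fin n) ℝ) (hP : P.PosDef)
    (S : Matrix (Fin N) (Fin n) ℝ)
    (hblk : (Matrix.fromBlocks P (X₁ * S) (X₁ * S)ᵀ (l • P)).PosSemidef)
    (hfacet : ∀ r, (F r) ⬝ᵥ (P *ᵥ (F r)) ≤ (g r) ^ 2)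
    (hXS : X₀ * S = P) :
    (l • P⁻¹ - (A + B * (U₀ * S * P⁻¹))ᵀ * P⁻¹ * (A + B * (U₀ * S * P⁻¹))).PosSemidef
    ∧ ({e : Fin n → ℝ | e ⬝ᵥ (P⁻¹ *ᵥ e) ≤ 1}
        ⊆ {e : Fin n → ℝ | ∀ r, (F *ᵥ e) r ≤ g r})
    ∧ ∀ e : ℕ → (Fin n → ℝ),
        (∀ k, e (k + 1) = (A + B * (U₀ * S * P⁻¹)) *ᵥ e k) →
        e 0 ⬝ᵥ (P⁻¹ *ᵥ e 0) ≤ 1 →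
        ∀ k : ℕ, (e k ⬝ᵥ (P⁻¹ *ᵥ e k) ≤ 1 ∧ ∀ r, (F *ᵥ e k) r ≤ g r) := by
  haveI := hP.isUnit.invertible
  have hPinv : (P⁻¹).PosDef := hP.inv
  set M : Matrix (Fin n) (Fin n) ℝ := A + B * (U₀ * S * P⁻¹) with hMdef
  have hPT : Pᵀ = P := by
    have := hP.isHermitian.eq
    simpa [Matrix.IsHermitian, Matrix.conjTranspose_eq_transpose_of_trivial] using hP.isHermitian
  have hPinvT : (P⁻¹)ᵀ = P⁻¹ := by
    simpa [Matrix.IsHermitian, Matrix.conjTranspose_eq_transpose_of_trivial] using hPinv.isHermitian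
  have hPPinv : P * P⁻¹ = 1 := mul_inv_of_invertible P
  have hPinvP : P⁻¹ * P = 1 := inv_mul_of_invertible P
  have hXSM : X₁ * S = M * P := by
    rw [hdata, hMdef, add_mul, Matrix.add_mul, Matrix.mul_assoc A X₀ S, hXS]
    congr 1
    rw [Matrix.mul_assoc B _ P, Matrix.mul_assoc (U₀ * S) P⁻¹ P, hPinvP, Matrix.mul_one,
      Matrix.mul_assoc]
  -- Schur complement
  have hblk' : (Matrix.fromBlocks P (X₁ * S) (X₁ * S)ᴴ (l • P)).PosSemidef := by
    have : (X₁ * S)ᴴ = (X₁ * S)ᵀ := by ext i j; simp [Matrix.conjTranspose_apply]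
    rw [this]; exact hblk
  have hschur : ((l • P) - (X₁ * S)ᴴ * P⁻¹ * (X₁ * S)).PosSemidef :=
    (Matrix.PosDef.fromBlocks₁₁ (X₁ * S) (l • P) hP).mp hblk'
  have hct : (X₁ * S)ᴴ = (X₁ * S)ᵀ := by ext i j; simp [Matrix.conjTranspose_apply]
  rw [hct, hXSM] at hschur
  have hconj := hschur.conjTranspose_mul_mul_same P⁻¹
  have hPinvH : (P⁻¹)ᴴ = P⁻¹ := hPinv.isHermitian.eq
  rw [hPinvH] at hconj
  have heq : P⁻¹ * ((l • P) - (M * P)ᵀ * P⁻¹ * (M * P)) * P⁻¹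
      = l • P⁻¹ - Mᵀ * P⁻¹ * M := by
    rw [Matrix.transpose_mul, hPT]
    rw [Matrix.mul_sub, Matrix.sub_mul]
    congr 1
    · rw [Matrix.mul_smul, Matrix.smul_mul, hPinvP, Matrix.one_mul]
    · calc P⁻¹ * (P * Mᵀ * P⁻¹ * (M * P)) * P⁻¹
          = (P⁻¹ * P) * (Mᵀ * P⁻¹ * M) * (P * P⁻¹) := by
            simp only [Matrix.mul_assoc]
        _ = Mᵀ * P⁻¹ * M := by
            rw [hPinvP, hPPinv, Matrix.one_mul, Matrix.mul_one]
  rw [heq] at hconj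
  -- Part (b)
  have partb : {e : Fin n → ℝ | e ⬝ᵥ (P⁻¹ *ᵥ e) ≤ 1}
      ⊆ {e : Fin n → ℝ | ∀ r, (F *ᵥ e) r ≤ g r} := by
    intro e he r
    simp only [Set.mem_setOf_eq] at he ⊢
    set u : Fin n → ℝ := F r with hu
    set a : ℝ := u ⬝ᵥ e with ha
    set c : ℝ := u ⬝ᵥ (P *ᵥ u) with hc
    set E : ℝ := e ⬝ᵥ (P⁻¹ *ᵥ e) with hE
    have hquad : ∀ t : ℝ, 0 ≤ c * (t * t) + (2 * a) * t + E := by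
      intro t
      have h0 := hP.posSemidef.dotProduct_mulVec_nonneg (t • u + P⁻¹ *ᵥ e)
      rw [star_trivial] at h0
      have expand : (t • u + P⁻¹ *ᵥ e) ⬝ᵥ (P *ᵥ (t • u + P⁻¹ *ᵥ e))
          = c * (t * t) + (2 * a) * t + E := by
        have h1 : u ⬝ᵥ (P *ᵥ (P⁻¹ *ᵥ e)) = a := by
          rw [Matrix.mulVec_mulVec, hPPinv, Matrix.one_mulVec]
        have h2 : (P⁻¹ *ᵥ e) ⬝ᵥ (P *ᵥ u) = a := by
          rw [Matrix.dotProduct_mulVec, ← Matrix.mulVec_transpose, hPT,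
            Matrix.mulVec_mulVec, hPPinv, Matrix.one_mulVec,
            dotProduct_comm]
        have h3 : (P⁻¹ *ᵥ e) ⬝ᵥ (P *ᵥ (P⁻¹ *ᵥ e)) = E := by
          rw [Matrix.mulVec_mulVec, hPPinv, Matrix.one_mulVec, dotProduct_comm]
        rw [Matrix.mulVec_add, Matrix.mulVec_smul, add_dotProduct,
          smul_dotProduct, dotProduct_add, dotProduct_add,
          dotProduct_smul, dotProduct_smul, h1, h2, h3]
        simp only [smul_eq_mul, ← hc]
        ring
      rw [expand] at h0
      exact h0
    have hdisc : discrim c (2 * a) E ≤ 0 := discrim_le_zero hquad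
    have hsq : a ^ 2 ≤ c * E := by
      rw [discrim] at hdisc; nlinarith
    have hc0 : 0 ≤ c := by
      have := hP.posSemidef.dotProduct_mulVec_nonneg u; rwa [star_trivial] at this
    have hE0 : 0 ≤ E := by
      have := hPinv.posSemidef.dotProduct_mulVec_nonneg e; rwa [star_trivial] at this
    have hcg : c ≤ (g r) ^ 2 := hfacet r
    have hFe : (F *ᵥ e) r = a := rfl
    rw [hFe]
    nlinarith [hg r, sq_nonneg (g r - a)]
  refine ⟨hconj, partb, ?_⟩
  -- Part (c)
  have key : ∀ v : Fin n → ℝ, (M *ᵥ v) ⬝ᵥ (P⁻¹ *ᵥ (M *ᵥ v)) ≤ l * (v ⬝ᵥ (P⁻¹ *ᵥ v)) := by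
    intro v
    have h0 := hconj.dotProduct_mulVec_nonneg v
    rw [star_trivial] at h0
    have hexp : v ⬝ᵥ ((l • P⁻¹ - Mᵀ * P⁻¹ * M) *ᵥ v)
        = l * (v ⬝ᵥ (P⁻¹ *ᵥ v)) - (M *ᵥ v) ⬝ᵥ (P⁻¹ *ᵥ (M *ᵥ v)) := by
      rw [Matrix.sub_mulVec, dotProduct_sub, Matrix.smul_mulVec,
        dotProduct_smul]
      congr 1
      rw [Matrix.mul_assoc, ← Matrix.mulVec_mulVec, Matrix.dotProduct_mulVec,
        Matrix.vecMul_transpose, Matrix.mulVec_mulVec]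
    rw [hexp] at h0
    linarith
  intro e hrec h0 k
  induction k with
  | zero => exact ⟨h0, partb h0⟩
  | succ k ih =>
    have hk1 : e (k + 1) ⬝ᵥ (P⁻¹ *ᵥ e (k + 1)) ≤ 1 := by
      rw [hrec k]
      calc (M *ᵥ e k) ⬝ᵥ (P⁻¹ *ᵥ (M *ᵥ e k)) ≤ l * (e k ⬝ᵥ (P⁻¹ *ᵥ e k)) := key (e k)
        _ ≤ l * 1 := by nlinarith [ih.1]
        _ ≤ 1 := by linarith
    exact ⟨hk1, partb hk1⟩
end
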